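/- Let $X_1, X_2, \ldots$ be i.i.d. real random variables with $S_0=0$, $S_n = X_1+\cdots+X_n$. Then for every $n \geq 1$, $\mathbb{P}(S_1 < 0, \ldots, S_{n-1} < 0, S_n = 0) = \mathbb{P}(S_1 > 0, \ldots, S_{n-1} > 0, S_n = 0)$. Consequently $\zeta := \sum_{n=1}^{\infty} \mathbb{P}(S_1 < 0, \ldots, S_{n-1} < 0, S_n = 0) = \sum_{n=1}^{\infty} \mathbb{P}(S_1 > 0, \ldots, S_{n-1} > 0, S_n = 0)$. -/

import Mathlib

/-!
Time reversal: for independent, identically distributed increments, the reversed increments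
`X (n - 1), …, X 0` have the same joint law as `X 0, …, X (n - 1)`. The walk of the reversed
increments is `k ↦ S n - S (n - k)`, so on `{S n = 0}` it stays negative before time `n` exactly
when the original walk stays positive.
-/

open MeasureTheory ProbabilityTheory Finset

lemma ProbabilityTheory.iIndepFun.identDistrib_precomp {Ω ι β : Type*} [MeasurableSpace Ω]
    [MeasurableSpace β] {μ : Measure Ω} {X : ι → Ω → β} (hX : ∀ i, Measurable (X i))
    (hindep : iIndepFun X μ) {σ : ι → ι} (hσ : σ.Injective)
    (hident : ∀ i, IdentDistrib (X (σ i)) (X i) μ μ) :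
    IdentDistrib (fun ω i ↦ X (σ i) ω) (fun ω i ↦ X i ω) μ μ where
  aemeasurable_fst := (measurable_pi_lambda _ fun i ↦ hX (σ i)).aemeasurable
  aemeasurable_snd := (measurable_pi_lambda _ hX).aemeasurable
  map_eq := by
    have := hindep.isProbabilityMeasure
    rw [(hindep.precomp hσ).map_fun_eq_infinitePi_map (fun i ↦ hX (σ i)),
      hindep.map_fun_eq_infinitePi_map hX]
    simp only [(hident _).map_eq]

def reflectBelow (n i : ℕ) : ℕ := if i < n then n - 1 - i else i

lemma reflectBelow_injective (n : ℕ) : (reflectBelow n).Injective := by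
  intro i j h
  unfold reflectBelow at h
  split_ifs at h <;> omega

lemma sum_range_reflectBelow {M : Type*} [AddCommGroup M] (x : ℕ → M) {k n : ℕ} (hk : k ≤ n) :
    ∑ i ∈ range k, x (reflectBelow n i) = ∑ i ∈ range n, x i - ∑ i ∈ range (n - k), x i := by
  have hsplit := sum_range_add x (n - k) k
  rw [Nat.sub_add_cancel hk] at hsplit
  rw [hsplit, add_sub_cancel_left, ← sum_range_reflect]
  refine sum_congr rfl fun i hi ↦ ?_
  have := mem_range.1 hi
  rw [reflectBelow, if_pos (by omega)]
  congr 1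
  omega

lemma reflectBelow_negative_excursion_iff {G : Type*} [AddCommGroup G] [PartialOrder G]
    [IsOrderedAddMonoid G] (x : ℕ → G) (n : ℕ) :
    ((∀ k, 1 ≤ k → k ≤ n - 1 → ∑ i ∈ range k, x (reflectBelow n i) < 0) ∧
        ∑ i ∈ range n, x (reflectBelow n i) = 0) ↔
      (∀ k, 1 ≤ k → k ≤ n - 1 → 0 < ∑ i ∈ range k, x i) ∧ ∑ i ∈ range n, x i = 0 := by
  simp only [sum_range_reflectBelow x le_rfl, Nat.sub_self, range_zero, sum_empty, sub_zero]
  refine and_congr_left fun hzero ↦ ?_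
  constructor
  · intro h k hk₁ hk₂
    have := h (n - k) (by omega) (by omega)
    rwa [sum_range_reflectBelow x (by omega), hzero, Nat.sub_sub_self (by omega), zero_sub,
      neg_neg_iff_pos] at this
  · intro h k hk₁ hk₂
    rw [sum_range_reflectBelow x (by omega), hzero, zero_sub, neg_neg_iff_pos]
    exact h (n - k) (by omega) (by omega)

lemma measurableSet_negative_excursion (n : ℕ) :
    MeasurableSet {x : ℕ → ℝ |
      (∀ k, 1 ≤ k → k ≤ n - 1 → ∑ i ∈ range k, x i < 0) ∧ ∑ i ∈ range n, x i = 0} := by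
  measurability

theorem negative_excursion_prob_eq_positive_general {Ω : Type*} [MeasurableSpace Ω] (μ : Measure Ω)
    (X : ℕ → Ω → ℝ) (hmeas : ∀ i, Measurable (X i))
    (hindep : iIndepFun X μ)
    (hident : ∀ i, IdentDistrib (X i) (X 0) μ μ)
    (S : ℕ → Ω → ℝ) (hS : ∀ n ω, S n ω = ∑ i ∈ Finset.range n, X i ω) :
    (∀ n : ℕ, 1 ≤ n →
      μ {ω | (∀ k, 1 ≤ k → k ≤ n - 1 → S k ω < 0) ∧ S n ω = 0}
        = μ {ω | (∀ k, 1 ≤ k → k ≤ n - 1 → 0 < S k ω) ∧ S n ω = 0}) ∧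
    (∑' n : ℕ, μ {ω | (∀ k, 1 ≤ k → k ≤ (n + 1) - 1 → S k ω < 0) ∧ S (n + 1) ω = 0})
      = ∑' n : ℕ, μ {ω | (∀ k, 1 ≤ k → k ≤ (n + 1) - 1 → 0 < S k ω) ∧ S (n + 1) ω = 0} := by
  have duality (n : ℕ) :
      μ {ω | (∀ k, 1 ≤ k → k ≤ n - 1 → S k ω < 0) ∧ S n ω = 0}
        = μ {ω | (∀ k, 1 ≤ k → k ≤ n - 1 → 0 < S k ω) ∧ S n ω = 0} := by
    have hreversed : IdentDistrib (fun ω i ↦ X (reflectBelow n i) ω) (fun ω i ↦ X i ω) μ μ :=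
      hindep.identDistrib_precomp hmeas (reflectBelow_injective n)
        fun i ↦ (hident _).trans (hident i).symm
    simp_rw [hS, ← reflectBelow_negative_excursion_iff (fun i ↦ X i _) n]
    exact (hreversed.measure_mem_eq (measurableSet_negative_excursion n)).symm
  exact ⟨fun n _ ↦ duality n, tsum_congr fun n ↦ duality (n + 1)⟩

/-- For a random walk with i.i.d. increments,
`P(S_1 < 0, …, S_{n-1} < 0, S_n = 0) = P(S_1 > 0, …, S_{n-1} > 0, S_n = 0)`
for every `n ≥ 1`, and hence the corresponding series agree. -/
theorem negative_excursion_prob_eq_positive {Ω : Type*} [MeasurableSpace Ω] (μ : Measure Ω)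
    [IsProbabilityMeasure μ] (X : ℕ → Ω → ℝ) (hmeas : ∀ i, Measurable (X i))
    (hindep : iIndepFun X μ)
    (hident : ∀ i, IdentDistrib (X i) (X 0) μ μ)
    (S : ℕ → Ω → ℝ) (hS : ∀ n ω, S n ω = ∑ i ∈ Finset.range n, X i ω) :
    (∀ n : ℕ, 1 ≤ n →
      μ {ω | (∀ k, 1 ≤ k → k ≤ n - 1 → S k ω < 0) ∧ S n ω = 0}
        = μ {ω | (∀ k, 1 ≤ k → k ≤ n - 1 → 0 < S k ω) ∧ S n ω = 0}) ∧
    (∑' n : ℕ, μ {ω | (∀ k, 1 ≤ k → k ≤ (n + 1) - 1 → S k ω < 0) ∧ S (n + 1) ω = 0})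
      = ∑' n : ℕ, μ {ω | (∀ k, 1 ≤ k → k ≤ (n + 1) - 1 → 0 < S k ω) ∧ S (n + 1) ω = 0} :=
  negative_excursion_prob_eq_positive_general μ X hmeas hindep hident S hS
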